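/- Define R(n) ∈ ℤ[x] by R(0)=1, R(1)=1+x, R(2)=1+x+x², R(3)=1+x+x²+x³, R(4)=1+x+x²+2x³+x⁴, and for n ≥ 5: R(n)=x·R(n−1)+R(n−2) if n is odd, R(n)=R(n−1)+x²·R(n−2) if n is even. Then for all n ≥ 3, R(n)(1) = 2·F(n), where F is the Fibonacci sequence. -/

import Mathlib

open Polynomial

noncomputable def R : ℕ → Polynomial ℤ
  | 0 => 1
  | 1 => 1 + X
  | 2 => 1 + X + X ^ 2
  | 3 => 1 + X + X ^ 2 + X ^ 3
  | 4 => 1 + X + X ^ 2 + 2 * X ^ 3 + X ^ 4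
  | (n + 5) =>
      if (n + 5) % 2 = 1 then X * R (n + 4) + R (n + 3)
      else R (n + 4) + X ^ 2 * R (n + 3)

/-- At `x = 1` both branches of the recurrence collapse to the Fibonacci recurrence. -/
lemma R_add_five_eval_one (n : ℕ) :
    (R (n + 5)).eval 1 = (R (n + 4)).eval 1 + (R (n + 3)).eval 1 := by
  rw [R]
  split_ifs <;> simp

lemma R_add_three_eval_one (k : ℕ) : (R (k + 3)).eval 1 = 2 * (Nat.fib (k + 3) : ℤ) := by
  induction k using Nat.twoStepInduction with
  | zero => norm_num [R, Nat.fib_add_two]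
  | one => norm_num [R, Nat.fib_add_two]
  | more k ih ih' =>
    rw [show k + 2 + 3 = k + 3 + 2 from rfl, Nat.fib_add_two, R_add_five_eval_one, ih, ih']
    push_cast
    ring

theorem R_eval_one (n : ℕ) (hn : 3 ≤ n) :
    (R n).eval 1 = 2 * (Nat.fib n : ℤ) := by
  obtain ⟨k, rfl⟩ := Nat.exists_eq_add_of_le' hn
  exact R_add_three_eval_one k
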